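/- arXiv:1306.3815 — 3 statements merged into one kernel-verified Lean document; each statement's English description precedes it below -/
import Mathlib

section
/- Let ρ be a product density on ℝ^d and f ∈ L²_ρ(ℝ^d). The ANOVA terms {f_u}_{u ⊆ D}, defined recursively by f_∅ = ∫_{ℝ^d} f ρ dξ and f_u = P_{-u}(f) − ∑_{v ⊊ u} f_v (where P_{-u} integrates out all variables with indices outside u), are pairwise orthogonal in L²_ρ(ℝ^d): for u ≠ w, ∫_{ℝ^d} f_u f_w ρ dξ = 0. -/
open MeasureTheory

noncomputable def margMeas {d : ℕ} (ρ : Fin d → ℝ → ℝ) (i : Fin d) : Measure ℝ :=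
  MeasureTheory.volume.withDensity fun s => ENNReal.ofReal (ρ i s)

noncomputable def piMeas {d : ℕ} (ρ : Fin d → ℝ → ℝ) : Measure (Fin d → ℝ) :=
  Measure.pi fun i => margMeas ρ i

/-- `P_{-u} f`: integrate out all coordinates with indices outside `u`
(against the corresponding marginal densities), keeping the coordinates in `u`. -/
noncomputable def proj {d : ℕ} (ρ : Fin d → ℝ → ℝ) (u : Finset (Fin d))
    (f : (Fin d → ℝ) → ℝ) : (Fin d → ℝ) → ℝ :=
  fun ξ => ∫ η, f (fun i => if i ∈ u then ξ i else η i) ∂(piMeas ρ)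

/-- The ANOVA term `f_u` (given by the inclusion–exclusion formula, which is
equivalent to the recursion `f_∅ = I_{d,ρ}(f)`, `f_u = P_{-u} f − ∑_{v ⊊ u} f_v`). -/
noncomputable def anova {d : ℕ} (ρ : Fin d → ℝ → ℝ) (u : Finset (Fin d))
    (f : (Fin d → ℝ) → ℝ) : (Fin d → ℝ) → ℝ :=
  fun ξ => ∑ v ∈ u.powerset, (-1 : ℝ) ^ (u.card - v.card) * proj ρ v f ξ

/-!
Integrating out a single coordinate `k` sends `P_{-v} f` to `P_{-(v \ {k})} f` (Fubini together
with the invariance of the product measure under resampling the coordinates outside a set). Hence,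
for `k ∈ u`, the inclusion–exclusion sum defining `f_u` cancels in the pairs `v`, `insert k v`, and
`f_u` integrates to zero in `ξ_k`. If `k ∈ u \ w`, the factor `f_w` does not depend on `ξ_k`, so
integrating `f_u f_w` first in `ξ_k` gives `0`.
-/

open Finset

theorem Finset.sum_powerset_neg_one_pow_mul_erase {α R : Type*} [DecidableEq α] [CommRing R]
    {u : Finset α} {k : α} (hk : k ∈ u) (P : Finset α → R) :
    ∑ v ∈ u.powerset, (-1 : R) ^ (#u - #v) * P (v.erase k) = 0 := by
  obtain ⟨s, hks, rfl⟩ : ∃ s, k ∉ s ∧ u = insert k s :=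
    ⟨u.erase k, notMem_erase k u, (insert_erase hk).symm⟩
  rw [sum_powerset_insert hks, ← sum_add_distrib]
  refine sum_eq_zero fun t ht => ?_
  have hkt : k ∉ t := fun h => hks (mem_powerset.mp ht h)
  have hts : #t ≤ #s := card_le_card (mem_powerset.mp ht)
  rw [card_insert_of_notMem hks, card_insert_of_notMem hkt, erase_insert hkt,
    erase_eq_of_notMem hkt, Nat.add_sub_add_right, Nat.sub_add_comm hts, pow_succ]
  ring

section PiProj

variable {ι : Type*} [DecidableEq ι] {X : ι → Type*}

theorem preimage_piecewise_univ_pi (s : Finset ι) (S : ∀ i, Set (X i)) :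
    (fun p : (∀ i, X i) × (∀ i, X i) => s.piecewise p.1 p.2) ⁻¹' Set.univ.pi S =
      Set.univ.pi (s.piecewise S fun _ => Set.univ) ×ˢ
        Set.univ.pi (s.piecewise (fun _ => Set.univ) S) := by
  ext p
  simp only [Set.mem_preimage, Set.mem_pi, Set.mem_univ, true_implies, Set.mem_prod,
    ← forall_and]
  refine forall_congr' fun i => ?_
  by_cases hi : i ∈ s <;> simp [hi]

theorem piecewise_piecewise_piecewise (s t : Finset ι) (x y z : ∀ i, X i) :
    s.piecewise (t.piecewise x y) z = (t ∩ s).piecewise x (s.piecewise y z) := by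
  ext i
  by_cases hs : i ∈ s <;> by_cases ht : i ∈ t <;> simp [hs, ht]

variable [∀ i, MeasurableSpace (X i)]

theorem measurable_piecewise_prod (s : Finset ι) :
    Measurable fun p : (∀ i, X i) × (∀ i, X i) => s.piecewise p.1 p.2 := by
  refine measurable_pi_lambda _ fun i => ?_
  by_cases hi : i ∈ s <;> simp only [hi, piecewise_eq_of_mem, piecewise_eq_of_notMem,
    not_false_eq_true] <;> fun_prop

variable [Fintype ι] {μ : ∀ i, Measure (X i)}

-- The paper's `P_{-s}`, for an arbitrary product measure `Measure.pi μ`.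
variable (μ) in
noncomputable def piProj (s : Finset ι) (f : (∀ i, X i) → ℝ) (x : ∀ i, X i) : ℝ :=
  ∫ y, f (s.piecewise x y) ∂Measure.pi μ

theorem piProj_congr (s : Finset ι) (f : (∀ i, X i) → ℝ) {x x' : ∀ i, X i}
    (h : ∀ i ∈ s, x i = x' i) : piProj μ s f x = piProj μ s f x' := by
  simp only [piProj, piecewise_congr s h fun _ _ => rfl]

theorem piProj_piecewise (s t : Finset ι) (f : (∀ i, X i) → ℝ) (x y : ∀ i, X i) :
    piProj μ s f (t.piecewise x y) = piProj μ s (fun z => f ((t ∩ s).piecewise x z)) y := by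
  simp only [piProj, piecewise_piecewise_piecewise]

variable (μ) in
noncomputable def anovaTerm (u : Finset ι) (f : (∀ i, X i) → ℝ) (x : ∀ i, X i) : ℝ :=
  ∑ v ∈ u.powerset, (-1 : ℝ) ^ (#u - #v) * piProj μ v f x

theorem anovaTerm_congr (u : Finset ι) (f : (∀ i, X i) → ℝ) {x x' : ∀ i, X i}
    (h : ∀ i ∈ u, x i = x' i) : anovaTerm μ u f x = anovaTerm μ u f x' :=
  sum_congr rfl fun v hv => by
    rw [piProj_congr v f fun i hi => h i (mem_powerset.mp hv hi)]

variable [∀ i, IsProbabilityMeasure (μ i)]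

variable (μ) in
theorem measurePreserving_piecewise (s : Finset ι) :
    MeasurePreserving (fun p : (∀ i, X i) × (∀ i, X i) => s.piecewise p.1 p.2)
      ((Measure.pi μ).prod (Measure.pi μ)) (Measure.pi μ) := by
  refine ⟨measurable_piecewise_prod s, (Measure.pi_eq fun S hS => ?_).symm⟩
  rw [Measure.map_apply (measurable_piecewise_prod s) (.univ_pi hS),
    preimage_piecewise_univ_pi, Measure.prod_prod, Measure.pi_pi, Measure.pi_pi,
    ← prod_mul_distrib]
  refine prod_congr rfl fun i _ => ?_
  by_cases hi : i ∈ s <;> simp [hi]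

theorem MeasureTheory.Integrable.comp_piecewise {f : (∀ i, X i) → ℝ}
    (hf : Integrable f (Measure.pi μ)) (s : Finset ι) :
    Integrable (fun p : (∀ i, X i) × (∀ i, X i) => f (s.piecewise p.1 p.2))
      ((Measure.pi μ).prod (Measure.pi μ)) :=
  (measurePreserving_piecewise μ s).integrable_comp_of_integrable hf

theorem ae_integrable_comp_piecewise {f : (∀ i, X i) → ℝ} (hf : Integrable f (Measure.pi μ))
    (s : Finset ι) :
    ∀ᵐ x ∂Measure.pi μ, Integrable (fun y => f (s.piecewise x y)) (Measure.pi μ) :=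
  (hf.comp_piecewise s).prod_right_ae

theorem integral_integral_piecewise {f : (∀ i, X i) → ℝ} (hf : Integrable f (Measure.pi μ))
    (s : Finset ι) :
    ∫ x, ∫ y, f (s.piecewise x y) ∂Measure.pi μ ∂Measure.pi μ = ∫ x, f x ∂Measure.pi μ := by
  have hφ := measurePreserving_piecewise μ s
  rw [← integral_prod _ (hf.comp_piecewise s), ← integral_map hφ.measurable.aemeasurable
    (by rw [hφ.map_eq]; exact hf.1), hφ.map_eq]

theorem integral_piProj {f : (∀ i, X i) → ℝ} (hf : Integrable f (Measure.pi μ))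
    (s : Finset ι) : ∫ x, piProj μ s f x ∂Measure.pi μ = ∫ x, f x ∂Measure.pi μ :=
  integral_integral_piecewise hf s

theorem MeasureTheory.Integrable.piProj {f : (∀ i, X i) → ℝ} (hf : Integrable f (Measure.pi μ))
    (s : Finset ι) : Integrable (piProj μ s f) (Measure.pi μ) :=
  (hf.comp_piecewise s).integral_prod_left

theorem ae_piProj_piProj_eq {f : (∀ i, X i) → ℝ} (hf : Integrable f (Measure.pi μ))
    (s t : Finset ι) :
    ∀ᵐ x ∂Measure.pi μ, piProj μ t (piProj μ s f) x = piProj μ (t ∩ s) f x ∧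
      Integrable (fun y => piProj μ s f (t.piecewise x y)) (Measure.pi μ) := by
  filter_upwards [ae_integrable_comp_piecewise hf (t ∩ s)] with x hx
  have hslice : (fun y => piProj μ s f (t.piecewise x y)) =
      piProj μ s fun z => f ((t ∩ s).piecewise x z) :=
    funext (piProj_piecewise s t f x)
  refine ⟨?_, hslice ▸ hx.piProj s⟩
  change ∫ y, piProj μ s f (t.piecewise x y) ∂Measure.pi μ = _
  rw [hslice]
  exact integral_piProj hx s

theorem integral_mul_eq_zero_of_piProj_ae_eq_zero {g h : (∀ i, X i) → ℝ} {t : Finset ι}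
    (hg : piProj μ t g =ᵐ[Measure.pi μ] 0) (hh : ∀ x x', (∀ i ∈ t, x i = x' i) → h x = h x') :
    ∫ x, g x * h x ∂Measure.pi μ = 0 := by
  by_cases hgh : Integrable (fun x => g x * h x) (Measure.pi μ)
  swap
  · exact integral_undef hgh
  rw [← integral_integral_piecewise hgh t]
  refine integral_eq_zero_of_ae ?_
  filter_upwards [hg] with x hx
  have hconst : ∀ y, h (t.piecewise x y) = h x :=
    fun y => hh _ _ fun i hi => piecewise_eq_of_mem _ _ _ hi
  simp only [hconst, integral_mul_const]
  exact mul_eq_zero_of_left hx _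

theorem piProj_anovaTerm_ae_eq_zero {f : (∀ i, X i) → ℝ} (hf : Integrable f (Measure.pi μ))
    {u : Finset ι} {k : ι} (hk : k ∈ u) :
    piProj μ (univ.erase k) (anovaTerm μ u f) =ᵐ[Measure.pi μ] 0 := by
  have hae := (Filter.eventually_all_finset u.powerset).mpr
    fun v _ => ae_piProj_piProj_eq hf v (univ.erase k)
  filter_upwards [hae] with x hx
  calc piProj μ (univ.erase k) (anovaTerm μ u f) x
      = ∑ v ∈ u.powerset, (-1 : ℝ) ^ (#u - #v) * piProj μ (univ.erase k) (piProj μ v f) x := by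
        rw [piProj]
        simp only [anovaTerm]
        rw [integral_finsetSum _ fun v hv => (hx v hv).2.const_mul _]
        simp only [integral_const_mul]
        rfl
    _ = ∑ v ∈ u.powerset, (-1 : ℝ) ^ (#u - #v) * piProj μ (v.erase k) f x :=
        sum_congr rfl fun v hv => by rw [(hx v hv).1, erase_inter, univ_inter]
    _ = 0 := sum_powerset_neg_one_pow_mul_erase hk fun v => piProj μ v f x

theorem integral_anovaTerm_mul_anovaTerm_eq_zero_of_mem_of_notMem {f : (∀ i, X i) → ℝ}
    (hf : Integrable f (Measure.pi μ)) {u w : Finset ι} {k : ι} (hku : k ∈ u) (hkw : k ∉ w) :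
    ∫ x, anovaTerm μ u f x * anovaTerm μ w f x ∂Measure.pi μ = 0 :=
  integral_mul_eq_zero_of_piProj_ae_eq_zero (piProj_anovaTerm_ae_eq_zero hf hku)
    fun _ _ h => anovaTerm_congr w f fun i hi =>
      h i (mem_erase.mpr ⟨ne_of_mem_of_not_mem hi hkw, mem_univ i⟩)

theorem integral_anovaTerm_mul_anovaTerm_eq_zero {f : (∀ i, X i) → ℝ}
    (hf : Integrable f (Measure.pi μ)) {u w : Finset ι} (huw : u ≠ w) :
    ∫ x, anovaTerm μ u f x * anovaTerm μ w f x ∂Measure.pi μ = 0 := by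
  by_cases hwu : w ⊆ u
  · obtain ⟨k, hku, hkw⟩ := not_subset.mp fun huw' => huw (huw'.antisymm hwu)
    exact integral_anovaTerm_mul_anovaTerm_eq_zero_of_mem_of_notMem hf hku hkw
  · obtain ⟨k, hkw, hku⟩ := not_subset.mp hwu
    simp only [mul_comm (anovaTerm μ u f _)]
    exact integral_anovaTerm_mul_anovaTerm_eq_zero_of_mem_of_notMem hf hkw hku

end PiProj

theorem isProbabilityMeasure_margMeas {d : ℕ} {ρ : Fin d → ℝ → ℝ} (hρ0 : ∀ i s, 0 ≤ ρ i s)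
    (hρ1 : ∀ i, ∫ s, ρ i s = 1) (i : Fin d) : IsProbabilityMeasure (margMeas ρ i) := by
  have hint : Integrable (ρ i) := by
    by_contra h
    simpa [integral_undef h] using hρ1 i
  constructor
  rw [margMeas, withDensity_apply _ .univ, setLIntegral_univ,
    ← ofReal_integral_eq_lintegral_ofReal hint (.of_forall (hρ0 i)), hρ1 i, ENNReal.ofReal_one]

theorem anova_eq_anovaTerm {d : ℕ} (ρ : Fin d → ℝ → ℝ) (u : Finset (Fin d)) (f : (Fin d → ℝ) → ℝ) :
    anova ρ u f = anovaTerm (margMeas ρ) u f := rfl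

theorem anova_orthogonal_general {d : ℕ} (ρ : Fin d → ℝ → ℝ)
    (hρ0 : ∀ i s, 0 ≤ ρ i s)
    (hρ1 : ∀ i, ∫ s, ρ i s = 1)
    (f : (Fin d → ℝ) → ℝ) (hf : MemLp f 2 (piMeas ρ))
    (u w : Finset (Fin d)) (huw : u ≠ w) :
    ∫ ξ, anova ρ u f ξ * anova ρ w f ξ ∂(piMeas ρ) = 0 := by
  have := isProbabilityMeasure_margMeas hρ0 hρ1
  simp only [anova_eq_anovaTerm, piMeas] at hf ⊢
  exact integral_anovaTerm_mul_anovaTerm_eq_zero (hf.integrable one_le_two) huw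

/-- The ANOVA terms of `f ∈ L²_ρ(ℝ^d)` are pairwise orthogonal in `L²_ρ(ℝ^d)`. -/
theorem anova_orthogonal {d : ℕ} (ρ : Fin d → ℝ → ℝ)
    (hρm : ∀ i, Measurable (ρ i)) (hρ0 : ∀ i s, 0 ≤ ρ i s)
    (hρ1 : ∀ i, ∫ s, ρ i s = 1)
    (f : (Fin d → ℝ) → ℝ) (hf : MemLp f 2 (piMeas ρ))
    (u w : Finset (Fin d)) (huw : u ≠ w) :
    ∫ ξ, anova ρ u f ξ * anova ρ w f ξ ∂(piMeas ρ) = 0 :=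
  anova_orthogonal_general ρ hρ0 hρ1 f hf u w huw
end

section
/- Consider f(ξ₁,ξ₂) = max{|ξ₁|, ξ₂} and a continuous probability density ρ₂ on ℝ with finite first moment. The projection (P₂f)(ξ₁) = |ξ₁| ∫_{−∞}^{|ξ₁|} ρ₂(s)ds + ∫_{|ξ₁|}^{∞} s ρ₂(s)ds is not continuously differentiable at ξ₁ = 0 whenever ∫_{−∞}^{0} ρ₂(s)ds > 0; specifically its one-sided derivatives at 0 are ±φ₂(0), where φ₂ is the distribution function of ρ₂. -/
/-!
Writing `G t = t Φ(t) + ∫_{(t,∞)} s ρ(s) ds` with `Φ` the distribution function of `ρ`, the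
projection is `G ∘ |·|`. By the fundamental theorem of calculus the two terms of `G` have
derivatives `Φ(t) + t ρ(t)` and `-t ρ(t)`, so `G` is differentiable with `G' = Φ`. Composing
with `|·|` yields one-sided derivatives `±Φ(0)` at `0`, which differ as soon as `Φ(0) > 0`.
-/

open MeasureTheory Set Filter

section IntegralDeriv

variable {f : ℝ → ℝ} {x : ℝ}

theorem hasDerivAt_integral_Iic (hf : Integrable f) (hfx : ContinuousAt f x) :
    HasDerivAt (fun t => ∫ s in Iic t, f s) (f x) x := by
  have ftc := intervalIntegral.integral_hasDerivAt_right (a := x) hf.intervalIntegrable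
    (hf.aestronglyMeasurable.stronglyMeasurableAtFilter) hfx
  refine (ftc.const_add (∫ s in Iic x, f s)).congr_of_eventuallyEq
    (Eventually.of_forall fun t => ?_)
  dsimp only
  rw [← intervalIntegral.integral_Iic_sub_Iic hf.integrableOn hf.integrableOn]
  ring

theorem hasDerivAt_integral_Ioi (hf : Integrable f) (hfx : ContinuousAt f x) :
    HasDerivAt (fun t => ∫ s in Ioi t, f s) (-f x) x := by
  refine ((hasDerivAt_integral_Iic hf hfx).const_sub (∫ s, f s)).congr_of_eventuallyEq
    (Eventually.of_forall fun t => ?_)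
  dsimp only
  rw [← intervalIntegral.integral_Iic_add_Ioi hf.integrableOn hf.integrableOn]
  ring

theorem hasDerivAt_mul_integral_Iic_add_integral_Ioi {ρ : ℝ → ℝ} (hρ : Integrable ρ)
    (hsρ : Integrable fun s => s * ρ s) (hρx : ContinuousAt ρ x) :
    HasDerivAt (fun t => t * (∫ s in Iic t, ρ s) + ∫ s in Ioi t, s * ρ s)
      (∫ s in Iic x, ρ s) x := by
  refine (((hasDerivAt_id' x).mul (hasDerivAt_integral_Iic hρ hρx)).add
    (hasDerivAt_integral_Ioi hsρ (continuousAt_id.mul hρx))).congr_deriv ?_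
  ring

end IntegralDeriv

section Abs

variable {F : Type*} [NormedAddCommGroup F] [NormedSpace ℝ F] {G : ℝ → F} {d : F}

theorem HasDerivAt.hasDerivWithinAt_comp_abs_Ici (hG : HasDerivAt G d 0) :
    HasDerivWithinAt (fun x => G |x|) d (Ici 0) 0 :=
  hG.hasDerivWithinAt.congr (fun x hx => by rw [abs_of_nonneg hx]) (by rw [abs_zero])

theorem HasDerivAt.hasDerivWithinAt_comp_abs_Iic (hG : HasDerivAt G d 0) :
    HasDerivWithinAt (fun x => G |x|) (-d) (Iic 0) 0 := by
  have hG' : HasDerivAt G d (-0) := by rwa [neg_zero]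
  have hGneg : HasDerivAt (fun x => G (-x)) (-d) 0 := by
    simpa [Function.comp_def] using hG'.scomp 0 (hasDerivAt_neg 0)
  exact hGneg.hasDerivWithinAt.congr (fun x hx => by rw [abs_of_nonpos hx]) (by simp)

end Abs

theorem not_differentiableAt_of_hasDerivWithinAt_Ici_Iic {F : Type*} [NormedAddCommGroup F]
    [NormedSpace ℝ F] {g : ℝ → F} {a b : F} {x : ℝ} (ha : HasDerivWithinAt g a (Ici x) x)
    (hb : HasDerivWithinAt g b (Iic x) x) (hab : a ≠ b) : ¬DifferentiableAt ℝ g x :=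
  fun hg => hab <|
    ((uniqueDiffOn_Ici x x self_mem_Ici).eq_deriv _ ha hg.hasDerivAt.hasDerivWithinAt).trans
      ((uniqueDiffOn_Iic x x self_mem_Iic).eq_deriv _ hb hg.hasDerivAt.hasDerivWithinAt).symm

theorem projection_not_C1_example_general (ρ₂ : ℝ → ℝ)
    (hρc : Continuous ρ₂) (hρ1 : ∫ s, ρ₂ s = 1)
    (hmom : Integrable (fun s => |s| * ρ₂ s))
    (φ₂ : ℝ → ℝ) (hφ : φ₂ = fun t => ∫ s in Set.Iic t, ρ₂ s)
    (g : ℝ → ℝ)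
    (hg : g = fun ξ₁ => |ξ₁| * φ₂ |ξ₁| + ∫ s in Set.Ioi |ξ₁|, s * ρ₂ s) :
    HasDerivWithinAt g (φ₂ 0) (Set.Ici 0) 0 ∧
    HasDerivWithinAt g (-φ₂ 0) (Set.Iic 0) 0 ∧
    (0 < φ₂ 0 → ¬ DifferentiableAt ℝ g 0) := by
  have hρ : Integrable ρ₂ := by
    by_contra h
    rw [integral_undef h] at hρ1
    exact zero_ne_one hρ1
  have hsρ : Integrable fun s => s * ρ₂ s :=
    hmom.mono (continuous_id.mul hρc).aestronglyMeasurable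
      (ae_of_all _ fun s => by simp)
  subst hφ hg
  have hG := hasDerivAt_mul_integral_Iic_add_integral_Ioi (x := 0) hρ hsρ hρc.continuousAt
  have hright := hG.hasDerivWithinAt_comp_abs_Ici
  have hleft := hG.hasDerivWithinAt_comp_abs_Iic
  exact ⟨hright, hleft, fun hpos =>
    not_differentiableAt_of_hasDerivWithinAt_Ici_Iic hright hleft (by linarith)⟩

/-- For `f(ξ₁,ξ₂) = max{|ξ₁|, ξ₂}`, the projection
`(P₂f)(ξ₁) = |ξ₁| φ₂(|ξ₁|) + ∫_{|ξ₁|}^∞ s ρ₂(s) ds` has one-sided derivatives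
`±φ₂(0)` at `0` and is not differentiable there whenever `φ₂(0) > 0`. -/
theorem projection_not_C1_example (ρ₂ : ℝ → ℝ)
    (hρc : Continuous ρ₂) (hρ0 : ∀ s, 0 ≤ ρ₂ s) (hρ1 : ∫ s, ρ₂ s = 1)
    (hmom : Integrable (fun s => |s| * ρ₂ s))
    (φ₂ : ℝ → ℝ) (hφ : φ₂ = fun t => ∫ s in Set.Iic t, ρ₂ s)
    (g : ℝ → ℝ)
    (hg : g = fun ξ₁ => |ξ₁| * φ₂ |ξ₁| + ∫ s in Set.Ioi |ξ₁|, s * ρ₂ s) :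
    HasDerivWithinAt g (φ₂ 0) (Set.Ici 0) 0 ∧
    HasDerivWithinAt g (-φ₂ 0) (Set.Iic 0) 0 ∧
    (0 < φ₂ 0 → ¬ DifferentiableAt ℝ g 0) :=
  projection_not_C1_example_general ρ₂ hρc hρ1 hmom φ₂ hφ g hg
end

section
/- Let g ∈ L¹([0,1]^d) and f = g ∘ φ, where φ = (φ₁,...,φ_d) : ℝ^d → (0,1)^d is given by the strictly increasing C¹ marginal distribution functions φ_j(t) = ∫_{−∞}^t ρ_j(s)ds of positive continuous densities ρ_j. Then for every u ⊆ D, the ANOVA terms correspond under the transformation: f_u(ξ^u) = g_u(φ_u(ξ^u)), and the variances agree: σ_u²(f) (with respect to the product density ρ) equals σ_u²(g) (with respect to Lebesgue measure on [0,1]^d). In particular all effective dimensions of f and g coincide. -/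
/-!
Each `φ_j` is the distribution function of the probability measure `ρ_j ds`; as `ρ_j > 0` it
is continuous and strictly increasing, so by the probability integral transform it pushes
`ρ_j ds` forward to the uniform measure on `[0,1]`. Hence `ξ ↦ φ(ξ)` is a measure-preserving
measurable embedding of `(ℝ^d, ρ dξ)` into `([0,1]^d, dυ)`, and changing variables in every
partial integral gives `P_{-u} f = (P⋆_{-u} g) ∘ φ`. The ANOVA terms, being signed sums of these,
correspond, and one more change of variables identifies the variances.
-/

open MeasureTheory

/-- The uniform (Lebesgue) probability measure on `[0,1]`. -/
noncomputable def unifMeas : Measure ℝ := MeasureTheory.volume.restrict (Set.Icc (0:ℝ) 1)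

/-- Lebesgue measure on the unit cube `[0,1]^d`. -/
noncomputable def piUnif (d : ℕ) : Measure (Fin d → ℝ) :=
  Measure.pi fun _ : Fin d => unifMeas

/-- `P⋆_{-u} g` for `g ∈ L¹([0,1]^d)`: integrate out all coordinates outside `u`
against Lebesgue measure on `[0,1]`. -/
noncomputable def projU {d : ℕ} (u : Finset (Fin d))
    (g : (Fin d → ℝ) → ℝ) : (Fin d → ℝ) → ℝ :=
  fun υ => ∫ η, g (fun i => if i ∈ u then υ i else η i) ∂(piUnif d)

/-- The ANOVA term `g_u` of `g ∈ L¹([0,1]^d)`. -/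
noncomputable def anovaU {d : ℕ} (u : Finset (Fin d))
    (g : (Fin d → ℝ) → ℝ) : (Fin d → ℝ) → ℝ :=
  fun υ => ∑ v ∈ u.powerset, (-1 : ℝ) ^ (u.card - v.card) * projU v g υ

open Set ProbabilityTheory

instance : IsProbabilityMeasure unifMeas :=
  ⟨by simp [unifMeas]⟩

lemma unifMeas_Iic (a : ℝ) : unifMeas (Iic a) = ENNReal.ofReal (min a 1) := by
  rw [unifMeas, Measure.restrict_apply measurableSet_Iic]
  have : Iic a ∩ Icc (0 : ℝ) 1 = Icc 0 (min a 1) := by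
    ext x
    simp only [mem_inter_iff, mem_Iic, mem_Icc, le_min_iff]
    tauto
  rw [this, Real.volume_Icc, sub_zero]

section ProbabilityIntegralTransform

variable {μ : Measure ℝ}

lemma cdf_pos_of_strictMono (hmono : StrictMono (cdf μ)) (t : ℝ) : 0 < cdf μ t :=
  (cdf_nonneg μ (t - 1)).trans_lt (hmono (sub_one_lt t))

theorem map_cdf_eq_unifMeas [IsProbabilityMeasure μ] (hcont : Continuous (cdf μ))
    (hmono : StrictMono (cdf μ)) :
    μ.map (cdf μ) = unifMeas := by
  have hmeas : Measurable (cdf μ) := (monotone_cdf μ).measurable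
  refine Measure.ext_of_Iic _ _ fun a => ?_
  rw [Measure.map_apply hmeas measurableSet_Iic, unifMeas_Iic]
  rcases le_or_gt a 0 with ha0 | ha0
  · have : cdf μ ⁻¹' Iic a = ∅ := eq_empty_of_forall_notMem fun t ht =>
      (ha0.trans_lt (cdf_pos_of_strictMono hmono t)).not_ge ht
    rw [this, measure_empty, ENNReal.ofReal_of_nonpos (min_le_of_left_le ha0)]
  rcases le_or_gt 1 a with ha1 | ha1
  · have : cdf μ ⁻¹' Iic a = univ :=
      eq_univ_of_forall fun t => (cdf_le_one μ t).trans ha1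
    rw [this, measure_univ, min_eq_right ha1, ENNReal.ofReal_one]
  obtain ⟨t, rfl⟩ : a ∈ range (cdf μ) :=
    mem_range_of_exists_le_of_exists_ge hcont
      ((tendsto_cdf_atBot μ).eventually_le_const ha0).exists
      ((tendsto_cdf_atTop μ).eventually_const_le ha1).exists
  have : cdf μ ⁻¹' Iic (cdf μ t) = Iic t := by ext s; exact hmono.le_iff_le
  rw [this, min_eq_left ha1.le, ofReal_cdf]

end ProbabilityIntegralTransform

section Density

variable {ρ : ℝ → ℝ}

lemma isProbabilityMeasure_withDensity_ofReal (hρ0 : ∀ s, 0 ≤ ρ s) (hρ1 : ∫ s, ρ s = 1) :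
    IsProbabilityMeasure (volume.withDensity fun s => ENNReal.ofReal (ρ s)) := by
  constructor
  rw [withDensity_apply _ MeasurableSet.univ, Measure.restrict_univ,
    ← ofReal_integral_eq_lintegral_ofReal (.of_integral_ne_zero (by simp [hρ1]))
      (.of_forall hρ0), hρ1, ENNReal.ofReal_one]

lemma cdf_withDensity_ofReal (hρ0 : ∀ s, 0 ≤ ρ s) (hρ1 : ∫ s, ρ s = 1) (t : ℝ) :
    cdf (volume.withDensity fun s => ENNReal.ofReal (ρ s)) t = ∫ s in Iic t, ρ s := by
  have := isProbabilityMeasure_withDensity_ofReal hρ0 hρ1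
  rw [cdf_eq_real, measureReal_def, withDensity_apply _ measurableSet_Iic,
    ← ofReal_integral_eq_lintegral_ofReal
      (Integrable.of_integral_ne_zero (by simp [hρ1])).integrableOn (.of_forall hρ0),
    ENNReal.toReal_ofReal (setIntegral_nonneg measurableSet_Iic fun s _ => hρ0 s)]

lemma integral_Iic_eq_add_intervalIntegral (hρ : Integrable ρ) (a t : ℝ) :
    ∫ s in Iic t, ρ s = (∫ s in Iic a, ρ s) + ∫ s in a..t, ρ s := by
  linarith [intervalIntegral.integral_Iic_sub_Iic (a := a) (b := t) hρ.integrableOn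
    hρ.integrableOn]

lemma continuous_integral_Iic (hρ : Integrable ρ) : Continuous fun t => ∫ s in Iic t, ρ s := by
  rw [funext (integral_Iic_eq_add_intervalIntegral hρ 0)]
  exact continuous_const.add (hρ.continuous_primitive 0)

lemma strictMono_integral_Iic (hρ : Integrable ρ) (hpos : ∀ s, 0 < ρ s) :
    StrictMono fun t => ∫ s in Iic t, ρ s := fun a b hab => by
  dsimp only
  rw [integral_Iic_eq_add_intervalIntegral hρ a b, lt_add_iff_pos_right]
  exact intervalIntegral.intervalIntegral_pos_of_pos hρ.intervalIntegrable hpos hab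

lemma map_integral_Iic_withDensity (hpos : ∀ s, 0 < ρ s) (hρ1 : ∫ s, ρ s = 1) :
    (volume.withDensity fun s => ENNReal.ofReal (ρ s)).map (fun t => ∫ s in Iic t, ρ s) =
      unifMeas := by
  have hρ : Integrable ρ := .of_integral_ne_zero (by simp [hρ1])
  have := isProbabilityMeasure_withDensity_ofReal (fun s => (hpos s).le) hρ1
  have hcdf : (fun t => ∫ s in Iic t, ρ s) =
      cdf (volume.withDensity fun s => ENNReal.ofReal (ρ s)) :=
    funext fun t => (cdf_withDensity_ofReal (fun s => (hpos s).le) hρ1 t).symm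
  rw [hcdf]
  apply map_cdf_eq_unifMeas <;> rw [← hcdf]
  exacts [continuous_integral_Iic hρ, strictMono_integral_Iic hρ hpos]

end Density

lemma measurableEmbedding_pi_map_of_strictMono {ι : Type*} [Countable ι] {φ : ι → ℝ → ℝ}
    (hφ : ∀ i, StrictMono (φ i)) : MeasurableEmbedding fun (ξ : ι → ℝ) i => φ i (ξ i) :=
  (measurable_pi_lambda _ fun i => (hφ i).monotone.measurable.comp (measurable_pi_apply i)
    ).measurableEmbedding fun _ _ h => funext fun i => (hφ i).injective (congrFun h i)

section Anova

variable {d : ℕ} {ρ : Fin d → ℝ → ℝ} {φ : Fin d → ℝ → ℝ}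

lemma proj_comp (hmp : MeasurePreserving (fun ξ i => φ i (ξ i)) (piMeas ρ) (piUnif d))
    (hemb : MeasurableEmbedding fun (ξ : Fin d → ℝ) i => φ i (ξ i)) (g : (Fin d → ℝ) → ℝ)
    (u : Finset (Fin d)) (ξ : Fin d → ℝ) :
    proj ρ u (fun ξ => g fun i => φ i (ξ i)) ξ = projU u g fun i => φ i (ξ i) := by
  rw [proj, projU, ← hmp.integral_comp hemb]
  simp only [apply_ite (φ _)]

lemma anova_comp (hmp : MeasurePreserving (fun ξ i => φ i (ξ i)) (piMeas ρ) (piUnif d))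
    (hemb : MeasurableEmbedding fun (ξ : Fin d → ℝ) i => φ i (ξ i)) (g : (Fin d → ℝ) → ℝ)
    (u : Finset (Fin d)) (ξ : Fin d → ℝ) :
    anova ρ u (fun ξ => g fun i => φ i (ξ i)) ξ = anovaU u g fun i => φ i (ξ i) := by
  simp only [anova, anovaU, proj_comp hmp hemb]

end Anova

theorem anova_transformation_invariance_general {d : ℕ} (ρ : Fin d → ℝ → ℝ)
    (hρ0 : ∀ j s, 0 < ρ j s)
    (hρ1 : ∀ j, ∫ s, ρ j s = 1)
    (φ : Fin d → ℝ → ℝ) (hφ : ∀ j t, φ j t = ∫ s in Set.Iic t, ρ j s)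
    (g : (Fin d → ℝ) → ℝ)
    (f : (Fin d → ℝ) → ℝ) (hfdef : f = fun ξ => g (fun i => φ i (ξ i))) :
    (∀ (u : Finset (Fin d)) (ξ : Fin d → ℝ),
      anova ρ u f ξ = anovaU u g (fun i => φ i (ξ i))) ∧
    (∀ u : Finset (Fin d),
      ∫ ξ, (anova ρ u f ξ) ^ 2 ∂(piMeas ρ) = ∫ υ, (anovaU u g υ) ^ 2 ∂(piUnif d)) := by
  have hφ_eq : ∀ j, φ j = fun t => ∫ s in Iic t, ρ j s := fun j => funext (hφ j)
  have hint : ∀ j, Integrable (ρ j) := fun j => .of_integral_ne_zero (by simp [hρ1 j])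
  have hmono : ∀ j, StrictMono (φ j) :=
    fun j => hφ_eq j ▸ strictMono_integral_Iic (hint j) (hρ0 j)
  have hmap : ∀ j, (margMeas ρ j).map (φ j) = unifMeas :=
    fun j => hφ_eq j ▸ map_integral_Iic_withDensity (hρ0 j) (hρ1 j)
  have hmp : MeasurePreserving (fun ξ i => φ i (ξ i)) (piMeas ρ) (piUnif d) :=
    measurePreserving_pi _ _ fun j => ⟨(hmono j).monotone.measurable, hmap j⟩
  have hemb := measurableEmbedding_pi_map_of_strictMono hmono
  subst hfdef
  refine ⟨anova_comp hmp hemb g, fun u => ?_⟩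
  simp only [anova_comp hmp hemb g]
  exact hmp.integral_comp hemb fun υ => anovaU u g υ ^ 2

/-- Under the transformation `f = g ∘ φ` given by the marginal distribution functions
`φ_j` of positive continuous densities `ρ_j`, the ANOVA terms correspond:
`f_u(ξ) = g_u(φ(ξ))`, and the ANOVA variances (hence all effective dimensions)
coincide. -/
theorem anova_transformation_invariance {d : ℕ} (ρ : Fin d → ℝ → ℝ)
    (hρc : ∀ j, Continuous (ρ j)) (hρ0 : ∀ j s, 0 < ρ j s)
    (hρ1 : ∀ j, ∫ s, ρ j s = 1)
    (φ : Fin d → ℝ → ℝ) (hφ : ∀ j t, φ j t = ∫ s in Set.Iic t, ρ j s)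
    (g : (Fin d → ℝ) → ℝ) (hg1 : Integrable g (piUnif d))
    (hg2 : MemLp g 2 (piUnif d))
    (f : (Fin d → ℝ) → ℝ) (hfdef : f = fun ξ => g (fun i => φ i (ξ i))) :
    (∀ (u : Finset (Fin d)) (ξ : Fin d → ℝ),
      anova ρ u f ξ = anovaU u g (fun i => φ i (ξ i))) ∧
    (∀ u : Finset (Fin d),
      ∫ ξ, (anova ρ u f ξ) ^ 2 ∂(piMeas ρ) = ∫ υ, (anovaU u g υ) ^ 2 ∂(piUnif d)) :=
  anova_transformation_invariance_general ρ hρ0 hρ1 φ hφ g f hfdef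
end
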